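/- arXiv:1607.06241 — 3 statements merged into one kernel-verified Lean document; each statement's English description precedes it below -/
import Mathlib

section
/- Let F be a field of characteristic p > 0 and G a finite p-group. Then the Jacobson radical of the group algebra FG equals the augmentation ideal of FG (the kernel of the augmentation map FG → F sending each group element to 1). -/
/-!
The augmentation ideal is maximal, its quotient being `F`, so it contains the Jacobson radical.
Conversely it lies in every maximal left ideal `m`. A finite `p`-group acting linearly on a nonzero
`𝔽_p`-vector space fixes a nonzero vector: the `𝔽_p`-span of an orbit is finite of `p`-power size
and `0` is fixed, so counting fixed points mod `p` yields another one. Hence the `G`-invariants of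
the simple module `FG ⧸ m` are nonzero, so they are everything; then `FG` acts on `FG ⧸ m` through
the augmentation, and an element of augmentation zero kills the class of `1`.
-/

open MulAction

theorem IsPGroup.exists_fixedPoint_ne_zero {p : ℕ} [Fact p.Prime] {G V : Type*} [Group G]
    [Finite G] (hG : IsPGroup p G) [AddCommGroup V] [Module (ZMod p) V] [DistribMulAction G V]
    {v : V} (hv : v ≠ 0) : ∃ w ∈ fixedPoints G V, w ≠ 0 := by
  set W := Submodule.span (ZMod p) (Set.range fun g : G => g • v)
  have hW : ∀ g : G, W ≤ W.comap ((DistribSMul.toAddMonoidHom V g).toZModLinearMap p) :=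
    fun g => Submodule.span_le.mpr <| by
      rintro _ ⟨h, rfl⟩
      exact Submodule.subset_span ⟨g * h, mul_smul g h v⟩
  let S : SubMulAction G V := ⟨W, fun g _ hx => hW g hx⟩
  have : Module.Finite (ZMod p) W := Module.Finite.span_of_finite _ (Set.finite_range _)
  have : Finite S := Module.finite_of_finite (ZMod p) (M := W)
  have hvW : v ∈ W := Submodule.subset_span ⟨1, one_smul G v⟩
  have hcard : p ∣ Nat.card S := by
    have : Nontrivial W := nontrivial_of_ne ⟨v, hvW⟩ 0 (by simpa using hv)
    change p ∣ Nat.card W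
    rw [Module.natCard_eq_pow_finrank (K := ZMod p), Nat.card_zmod]
    exact dvd_pow_self p Module.finrank_pos.ne'
  obtain ⟨w, hw, hw0⟩ := hG.exists_fixed_point_of_prime_dvd_card_of_fixed_point S hcard
    (a := ⟨0, W.zero_mem⟩) fun g => Subtype.ext (smul_zero g)
  exact ⟨w, fun g => congrArg Subtype.val (hw g), fun h => hw0 (Subtype.ext h.symm)⟩

namespace MonoidAlgebra

section Invariants

variable {F G V : Type*} [CommSemiring F] [Monoid G] [AddCommMonoid V]
  [Module (MonoidAlgebra F G) V]

theorem smul_eq_lift_one_smul {v : V} (hv : ∀ g, of F G g • v = v) (r : MonoidAlgebra F G) :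
    r • v = algebraMap F (MonoidAlgebra F G) (lift F F G 1 r) • v := by
  induction r using MonoidAlgebra.induction_on with
  | of g => rw [lift_of, MonoidHom.one_apply, map_one, one_smul, hv g]
  | add a b ha hb => rw [add_smul, ha, hb, map_add, map_add, add_smul]
  | smul c r hr => rw [map_smul, smul_eq_mul, map_mul, Algebra.smul_def, mul_smul, hr, mul_smul]

variable (F G V) in
def invariants : Submodule (MonoidAlgebra F G) V where
  carrier := {v | ∀ g, of F G g • v = v}
  add_mem' ha hb g := by rw [smul_add, ha g, hb g]
  zero_mem' g := smul_zero _
  smul_mem' r v hv g := by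
    rw [smul_eq_lift_one_smul hv r, ← mul_smul, ← Algebra.commutes, mul_smul, hv g]

end Invariants

section PGroup

variable {F G : Type*} [CommRing F] (p : ℕ) [Fact p.Prime] [CharP F p] [Group G] [Finite G]

theorem invariants_ne_bot (hG : IsPGroup p G) {V : Type*} [AddCommGroup V]
    [Module (MonoidAlgebra F G) V] [Nontrivial V] : invariants F G V ≠ ⊥ := by
  have hp : ∀ v : V, p • v = 0 := fun v => by
    rw [← Nat.cast_smul_eq_nsmul (MonoidAlgebra F G), ← map_natCast (algebraMap F _),
      CharP.cast_eq_zero, map_zero, zero_smul]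
  let _ : Module (ZMod p) V := AddCommGroup.zmodModule hp
  let _ : DistribMulAction G V := DistribMulAction.compHom V (of F G)
  obtain ⟨v, hv⟩ := exists_ne (0 : V)
  obtain ⟨w, hw, hw0⟩ := hG.exists_fixedPoint_ne_zero hv
  exact fun h => hw0 <| (Submodule.eq_bot_iff _).mp h w hw

theorem invariants_eq_top (hG : IsPGroup p G) {V : Type*} [AddCommGroup V]
    [Module (MonoidAlgebra F G) V] [IsSimpleModule (MonoidAlgebra F G) V] : invariants F G V = ⊤ :=
  have := IsSimpleModule.nontrivial (MonoidAlgebra F G) V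
  (eq_bot_or_eq_top _).resolve_left (invariants_ne_bot p hG)

theorem ker_lift_one_le_of_isMaximal (hG : IsPGroup p G) (m : Ideal (MonoidAlgebra F G))
    (hm : m.IsMaximal) : RingHom.ker (lift F F G 1) ≤ m := by
  intro x hx
  have := isSimpleModule_iff_isCoatom.mpr hm.out
  have hfix : Submodule.Quotient.mk 1 ∈ invariants F G (MonoidAlgebra F G ⧸ m) := by
    rw [invariants_eq_top p hG]
    exact Submodule.mem_top
  rw [← Submodule.Quotient.mk_eq_zero, ← mul_one x, ← smul_eq_mul, Submodule.Quotient.mk_smul,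
    smul_eq_lift_one_smul hfix, RingHom.mem_ker.mp hx, map_zero, zero_smul]

end PGroup

end MonoidAlgebra

/-- For a field `F` of characteristic `p > 0` and a finite `p`-group `G`, the Jacobson radical of
the group algebra `FG` equals the augmentation ideal, i.e. the kernel of the augmentation map
`FG → F` sending each group element to `1`. -/
theorem jacobson_eq_augmentation_ideal (F : Type*) [Field F] (p : ℕ) [Fact p.Prime] [CharP F p]
    (G : Type*) [Group G] [Finite G] (hG : IsPGroup p G) :
    Ideal.jacobson (⊥ : Ideal (MonoidAlgebra F G)) =
      RingHom.ker ((MonoidAlgebra.lift F F G) (1 : G →* F)) := by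
  refine le_antisymm (sInf_le ⟨bot_le, ?_⟩) (le_sInf fun m hm =>
    MonoidAlgebra.ker_lift_one_le_of_isMaximal p hG m hm.2)
  exact RingHom.ker_isMaximal_of_surjective _ fun c =>
    ⟨algebraMap F _ c, AlgHom.commutes _ c⟩
end

section
/- Let F be an algebraically closed field of characteristic p > 0, P a finite abelian p-group, and I a p'-subgroup of Aut(P) with C_P(I) = 1. Then the Jacobson radical of the fixed-point algebra FP^I = {x ∈ FP : x^γ = x for all γ ∈ I} is contained in the square of the Jacobson radical of FP, i.e. J(FP^I) ⊆ (J(FP))^2. -/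
set_option synthInstance.maxHeartbeats 1000000
set_option maxHeartbeats 1000000

/-- The Jacobson radical of an `F`-algebra `A`, viewed as an `F`-submodule. -/
noncomputable def jacRad (F A : Type*) [CommSemiring F] [Ring A] [Algebra F A] : Submodule F A :=
  Submodule.restrictScalars F (Ideal.jacobson (⊥ : Ideal A))

/-- The fixed-point subalgebra `(FP)^I` of the group algebra `FP` under a subgroup
`I ≤ Aut P`, acting by `F`-linear extension of its action on `P`. -/
def fixedPointAlgebra (F : Type*) [CommSemiring F] {P : Type*} [Group P]
    (I : Subgroup (MulAut P)) : Subalgebra F (MonoidAlgebra F P) where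
  carrier := {x | ∀ γ ∈ I, MonoidAlgebra.domCongr F F (γ : P ≃* P) x = x}
  mul_mem' := by intro x y hx hy γ hγ; simp only [Set.mem_setOf_eq, map_mul] at *
                 rw [hx γ hγ, hy γ hγ]
  add_mem' := by intro x y hx hy γ hγ; simp only [Set.mem_setOf_eq, map_add] at *
                 rw [hx γ hγ, hy γ hγ]
  one_mem' := by intro γ hγ; simp
  zero_mem' := by intro γ hγ; simp
  algebraMap_mem' := by intro r γ hγ; simp [Algebra.algebraMap_eq_smul_one]

/-!
Let `K ⊆ FP` be the augmentation ideal, spanned by the elements `g - 1`. Since `P` is a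
`p`-group, each `g - 1` is nilpotent, so `K ≤ J(FP)`. Modulo `K²` the map `g ↦ g - 1` is
additive, because `ab - 1 = (a - 1) + (b - 1) + (a - 1)(b - 1)`. Hence for `w ∈ K` the `I`-trace
`∑_γ γ w` is congruent mod `K²` to a combination of the elements `∏_γ γ g - 1`, and these vanish
since `∏_γ γ g` is `I`-fixed, so equals `1` by `C_P(I) = 1`. An element `y ∈ J(FP^I)` lies in the
kernel of the augmentation `FP^I → F`, hence in `K`, and being fixed its trace is `|I| • y`.
As `|I|` is invertible in `F`, `y ∈ K² ≤ J(FP)²`.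
-/

open MonoidAlgebra

lemma prod_apply_eq_one {G : Type*} [CommGroup G] (I : Subgroup (MulAut G)) [Fintype I]
    (hC : ∀ x : G, (∀ γ ∈ I, γ x = x) → x = 1) (g : G) :
    ∏ γ : I, (γ : MulAut G) g = 1 := by
  refine hC _ fun δ hδ => ?_
  rw [map_prod]
  exact Fintype.prod_equiv (Equiv.mulLeft ⟨δ, hδ⟩) _ _ fun _ => rfl

lemma AlgHom.jacobson_bot_le_ker {F A : Type*} [Field F] [Ring A] [Algebra F A]
    (φ : A →ₐ[F] F) : Ideal.jacobson (⊥ : Ideal A) ≤ RingHom.ker φ :=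
  sInf_le ⟨bot_le,
    RingHom.ker_isMaximal_of_surjective φ fun c => ⟨algebraMap F A c, φ.commutes c⟩⟩

namespace MonoidAlgebra

section Monoid

variable (k G : Type*) [CommRing k] [Monoid G]

noncomputable def augmentation : k[G] →ₐ[k] k :=
  lift k k G 1

noncomputable def augmentationIdeal : Submodule k k[G] :=
  Submodule.span k (Set.range fun g : G => of k G g - 1)

variable {k G}

lemma of_sub_one_mem_augmentationIdeal (g : G) : of k G g - 1 ∈ augmentationIdeal k G :=
  Submodule.subset_span ⟨g, rfl⟩

lemma mem_augmentationIdeal_of_augmentation_eq_zero {z : k[G]} (hz : augmentation k G z = 0) :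
    z ∈ augmentationIdeal k G := by
  suffices h : ∀ z : k[G], z - augmentation k G z • 1 ∈ augmentationIdeal k G by
    simpa [hz] using h z
  intro z
  induction z using MonoidAlgebra.induction_on with
  | of g => simpa [augmentation] using of_sub_one_mem_augmentationIdeal g
  | add x y hx hy =>
    convert add_mem hx hy using 1
    rw [map_add, add_smul]
    abel
  | smul r x hx =>
    convert Submodule.smul_mem _ r hx using 1
    rw [map_smul, smul_sub, smul_assoc]

end Monoid

variable {k G : Type*} [CommRing k]

lemma sum_of_sub_one_sub_of_prod_sub_one_mem_sq [CommMonoid G] {ι : Type*} (f : ι → G)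
    (s : Finset ι) :
    ∑ i ∈ s, (of k G (f i) - 1) - (of k G (∏ i ∈ s, f i) - 1) ∈ augmentationIdeal k G ^ 2 := by
  classical
  rw [sq]
  induction s using Finset.induction with
  | empty => simp [← MonoidAlgebra.one_def]
  | insert a s ha ih =>
    have hprod := Submodule.mul_mem_mul (of_sub_one_mem_augmentationIdeal (k := k) (f a))
      (of_sub_one_mem_augmentationIdeal (∏ i ∈ s, f i))
    convert sub_mem ih hprod using 1
    rw [Finset.sum_insert ha, Finset.prod_insert ha, map_mul]
    ring

variable [CommGroup G]

lemma augmentationIdeal_le_jacRad (p : ℕ) [Fact p.Prime] [CharP k p] (hG : IsPGroup p G) :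
    augmentationIdeal k G ≤ jacRad k k[G] := by
  have : CharP k[G] p := charP_of_injective_algebraMap (FaithfulSMul.algebraMap_injective k k[G]) p
  have : ExpChar k[G] p := .prime Fact.out
  refine Submodule.span_le.2 ?_
  rintro _ ⟨g, rfl⟩
  refine Ideal.radical_le_jacobson (mem_nilradical.2 ?_)
  obtain ⟨n, hn⟩ := hG g
  exact ⟨p ^ n, by rw [sub_pow_expChar_pow, ← map_pow, hn, map_one, one_pow, sub_self]⟩

lemma sum_domCongr_mem_augmentationIdeal_sq (I : Subgroup (MulAut G)) [Fintype I]
    (hC : ∀ x : G, (∀ γ ∈ I, γ x = x) → x = 1) {w : k[G]} (hw : w ∈ augmentationIdeal k G) :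
    ∑ γ : I, domCongr k k (γ : MulAut G) w ∈ augmentationIdeal k G ^ 2 := by
  induction hw using Submodule.span_induction with
  | mem x hx =>
    obtain ⟨g, rfl⟩ := hx
    have h := sum_of_sub_one_sub_of_prod_sub_one_mem_sq (k := k)
      (fun γ : I => (γ : MulAut G) g) Finset.univ
    rw [prod_apply_eq_one I hC, map_one, sub_self, sub_zero] at h
    simpa [of_apply] using h
  | zero => simp
  | add x y _ _ hx hy => simpa [Finset.sum_add_distrib] using add_mem hx hy
  | smul r x _ hx => simpa [Finset.smul_sum] using Submodule.smul_mem _ r hx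

end MonoidAlgebra

theorem jacobson_fixedPointAlgebra_le_sq_general (F : Type*) [Field F]
    (p : ℕ) [Fact p.Prime] [CharP F p]
    (P : Type*) [CommGroup P] (hP : IsPGroup p P)
    (I : Subgroup (MulAut P)) (hI : Nat.Coprime (Nat.card I) p)
    (hC : ∀ x : P, (∀ γ ∈ I, γ x = x) → x = 1) :
    Submodule.map (fixedPointAlgebra F I).val.toLinearMap
        (jacRad F (fixedPointAlgebra F I)) ≤
      jacRad F (MonoidAlgebra F P) ^ 2 := by
  have hp : p.Prime := Fact.out
  have : Finite I :=
    Nat.finite_of_card_ne_zero fun h => hp.ne_one ((Nat.coprime_zero_left _).1 (h ▸ hI))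
  have := Fintype.ofFinite I
  rintro _ ⟨y, hy, rfl⟩
  have hyK : (y : MonoidAlgebra F P) ∈ augmentationIdeal F P :=
    mem_augmentationIdeal_of_augmentation_eq_zero
      (AlgHom.jacobson_bot_le_ker ((augmentation F P).comp (fixedPointAlgebra F I).val) hy)
  have htrace : ∑ γ : I, domCongr F F (γ : MulAut P) (y : MonoidAlgebra F P) =
      (Nat.card I : F) • (y : MonoidAlgebra F P) := by
    simp [fun γ : I => y.2 γ γ.2, Nat.card_eq_fintype_card, ← Nat.cast_smul_eq_nsmul F]
  have hcard : (Nat.card I : F) ≠ 0 :=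
    ((CharP.isUnit_natCast_iff hp).2 (hp.coprime_iff_not_dvd.1 hI.symm)).ne_zero
  have hyK2 : (y : MonoidAlgebra F P) ∈ augmentationIdeal F P ^ 2 :=
    (Submodule.smul_mem_iff _ hcard).1 (htrace ▸ sum_domCongr_mem_augmentationIdeal_sq I hC hyK)
  exact pow_le_pow_left' (augmentationIdeal_le_jacRad p hP) 2 hyK2

/-- If `F` is algebraically closed of characteristic `p > 0`, `P` is a finite abelian `p`-group,
and `I` is a `p'`-subgroup of `Aut P` with `C_P(I) = 1`, then the Jacobson radical of the
fixed-point algebra `(FP)^I` is contained in the square of the Jacobson radical of `FP`. -/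
theorem jacobson_fixedPointAlgebra_le_sq (F : Type*) [Field F] [IsAlgClosed F]
    (p : ℕ) [Fact p.Prime] [CharP F p]
    (P : Type*) [CommGroup P] [Fintype P] (hP : IsPGroup p P)
    (I : Subgroup (MulAut P)) (hI : Nat.Coprime (Nat.card I) p)
    (hC : ∀ x : P, (∀ γ ∈ I, γ x = x) → x = 1) :
    Submodule.map (fixedPointAlgebra F I).val.toLinearMap
        (jacRad F (fixedPointAlgebra F I)) ≤
      jacRad F (MonoidAlgebra F P) ^ 2 :=
  jacobson_fixedPointAlgebra_le_sq_general F p P hP I hI hC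
end

section
/- Let F be an algebraically closed field of characteristic p > 0, P a finite abelian p-group, and I a p'-subgroup of Aut(P). Then LL(FP^I) ≤ LL(F C_P(I)) + (LL(F[P,I]) - 1)/2, where LL denotes the Loewy length and FP^I is the algebra of I-fixed points of FP. -/
/-!
Let `C = C_P(I)`, `Q = [P, I]`, and let `J_H` be the span of the `h - 1`, `h ∈ H`, in `FP`,
so that `J_H ^ LL(FH) = 0` (it lies in the image of `J(FH)`). For `x` in the radical of
`FP^I` the augmentation vanishes, so `x` is a combination of elements `a - 1`, and
`|I| x = Tr x` with `Tr = ∑_{γ ∈ I} γ`. By coprimality `a = c q` with `c ∈ C`, `q ∈ Q`, and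
`Tr (c q - 1) = (c - 1) Tr q + ∑_γ (γ q - 1)`, where the last sum is congruent modulo
`J_Q ^ 2` to `∏_γ γ q - 1 = 0`. Hence `J(FP^I) ⊆ J_C FP + J_Q ^ 2`, and the binomial theorem
bounds the nilpotency index of the right-hand side by `LL(FC) + ⌈LL(FQ) / 2⌉ - 1`.
-/

set_option synthInstance.maxHeartbeats 1000000
set_option maxHeartbeats 1000000

/-- The Loewy length of an `F`-algebra `A`: the least `l > 0` with `(J A) ^ l = 0`. -/
noncomputable def LL (F A : Type*) [CommSemiring F] [Ring A] [Algebra F A] : ℕ :=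
  sInf {l : ℕ | 0 < l ∧ jacRad F A ^ l = ⊥}

/-- The subgroup of fixed points of a group of automorphisms `I ≤ Aut P`. -/
def fixedSubgroup {P : Type*} [Group P] (I : Subgroup (MulAut P)) : Subgroup P where
  carrier := {x | ∀ γ ∈ I, γ x = x}
  one_mem' := by intro γ _; simp
  mul_mem' := by intro x y hx hy γ hγ; simp [map_mul, hx γ hγ, hy γ hγ]
  inv_mem' := by intro x hx γ hγ; simp [map_inv, hx γ hγ]

/-- The subgroup `[P, I]` generated by the elements `x⁻¹ · γ x` for `x ∈ P`, `γ ∈ I`. -/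
def commSubgroup {P : Type*} [Group P] (I : Subgroup (MulAut P)) : Subgroup P :=
  Subgroup.closure {y | ∃ x : P, ∃ γ ∈ I, y = x⁻¹ * γ x}

open MonoidAlgebra

section LoewyLength

theorem LL_le_of_jacRad_pow_eq_bot {F A : Type*} [CommSemiring F] [Ring A] [Algebra F A] {t : ℕ}
    (ht : 0 < t) (h : jacRad F A ^ t = ⊥) : LL F A ≤ t :=
  Nat.sInf_le ⟨ht, h⟩

theorem mem_jacRad_of_isNilpotent {F A : Type*} [CommSemiring F] [CommRing A] [Algebra F A]
    {x : A} (hx : IsNilpotent x) : x ∈ jacRad F A :=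
  Ideal.radical_le_jacobson (mem_nilradical.2 hx)

theorem apply_eq_zero_of_mem_jacRad {F A : Type*} [Field F] [Ring A] [Algebra F A]
    (φ : A →ₐ[F] F) {x : A} (hx : x ∈ jacRad F A) : φ x = 0 := by
  have hφ : Function.Surjective φ := fun r => ⟨algebraMap F A r, φ.commutes r⟩
  exact (sInf_le ⟨bot_le, RingHom.ker_isMaximal_of_surjective (φ : A →+* F) hφ⟩ :
    Ideal.jacobson ⊥ ≤ RingHom.ker (φ : A →+* F)) hx

theorem Submodule.pow_eq_bot_of_map_le {F A B : Type*} [CommSemiring F] [Semiring A] [Semiring B]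
    [Algebra F A] [Algebra F B] (f : A →ₐ[F] B) (hf : Function.Injective f)
    {S : Submodule F A} {T : Submodule F B} (hST : S.map f.toLinearMap ≤ T) {n : ℕ}
    (hT : T ^ n = ⊥) : S ^ n = ⊥ := by
  apply Submodule.map_injective_of_injective (f := f.toLinearMap) hf
  rw [Submodule.map_pow, Submodule.map_bot, ← le_bot_iff, ← hT]
  exact pow_le_pow_left' hST n

variable {F A : Type*} [Field F] [CommRing A] [Algebra F A] [FiniteDimensional F A]

theorem exists_jacRad_pow_eq_bot : ∃ l, 0 < l ∧ jacRad F A ^ l = ⊥ := by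
  have : IsArtinianRing A := isArtinian_of_tower F inferInstance
  obtain ⟨n, hn⟩ := IsArtinianRing.isNilpotent_jacobson_bot (R := A)
  refine ⟨n + 1, n.succ_pos, ?_⟩
  rw [jacRad, ← Submodule.restrictScalars_pow n.succ_ne_zero, pow_succ, hn, zero_mul]
  rfl

theorem LL_pos : 0 < LL F A :=
  (Nat.sInf_mem (exists_jacRad_pow_eq_bot (F := F) (A := A))).1

theorem jacRad_pow_LL_eq_bot : jacRad F A ^ LL F A = ⊥ :=
  (Nat.sInf_mem (exists_jacRad_pow_eq_bot (F := F) (A := A))).2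

end LoewyLength

theorem map_mem_commSubgroup {P : Type*} [Group P] {I : Subgroup (MulAut P)} {γ : MulAut P}
    (hγ : γ ∈ I) {q : P} (hq : q ∈ commSubgroup I) : γ q ∈ commSubgroup I := by
  suffices commSubgroup I ≤ (commSubgroup I).comap γ.toMonoidHom from this hq
  rw [commSubgroup, Subgroup.closure_le]
  rintro _ ⟨x, δ, hδ, rfl⟩
  refine Subgroup.subset_closure
    ⟨γ x, γ * δ * γ⁻¹, mul_mem (mul_mem hγ hδ) (inv_mem hγ), ?_⟩
  simp [MulAut.mul_apply, MulAut.inv_def]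

section AutNorm

variable {P : Type*} [CommGroup P] (I : Subgroup (MulAut P)) [Fintype I]

noncomputable def autNorm : P →* P where
  toFun x := ∏ γ : I, (γ : MulAut P) x
  map_one' := by simp
  map_mul' x y := by simp [Finset.prod_mul_distrib]

theorem autNorm_apply (x : P) : autNorm I x = ∏ γ : I, (γ : MulAut P) x := rfl

theorem autNorm_mem_fixedSubgroup (x : P) : autNorm I x ∈ fixedSubgroup I := fun δ hδ => by
  rw [autNorm_apply, map_prod]
  exact Fintype.prod_bijective (fun γ : I => ⟨δ, hδ⟩ * γ) (Group.mulLeft_bijective _) _ _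
    fun _ => rfl

theorem autNorm_map {δ : MulAut P} (hδ : δ ∈ I) (x : P) : autNorm I (δ x) = autNorm I x :=
  Fintype.prod_bijective (fun γ : I => γ * ⟨δ, hδ⟩) (Group.mulRight_bijective _) _ _
    fun _ => rfl

theorem commSubgroup_le_ker_autNorm : commSubgroup I ≤ (autNorm I).ker := by
  rw [commSubgroup, Subgroup.closure_le]
  rintro _ ⟨x, γ, hγ, rfl⟩
  simp [autNorm_map I hγ]

theorem fixedSubgroup_sup_commSubgroup_eq_top (hcop : (Nat.card P).Coprime (Nat.card I)) :
    fixedSubgroup I ⊔ commSubgroup I = ⊤ := by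
  refine eq_top_iff.2 fun x _ => Subgroup.mem_sup.2 ?_
  -- Write `x = y ^ |I| = N(y) * ∏ γ, (γ y)⁻¹ * y` with `N = autNorm I`.
  obtain ⟨y, rfl⟩ := (powCoprime hcop).surjective x
  refine ⟨autNorm I y, autNorm_mem_fixedSubgroup I y, (autNorm I y)⁻¹ * y ^ Nat.card I, ?_,
    mul_inv_cancel_left _ _⟩
  have hprod : (autNorm I y)⁻¹ * y ^ Nat.card I = ∏ γ : I, ((γ : MulAut P) y)⁻¹ * y := by
    rw [autNorm_apply, Finset.prod_mul_distrib, Finset.prod_inv_distrib, Finset.prod_const,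
      Finset.card_univ, Nat.card_eq_fintype_card]
  rw [hprod]
  refine Subgroup.prod_mem _ fun γ _ => ?_
  rw [← inv_inv (_ * y), mul_inv_rev, inv_inv]
  exact inv_mem (Subgroup.subset_closure ⟨y, γ, γ.2, rfl⟩)

end AutNorm

section AugSpan

variable (F : Type*) [CommRing F] {P : Type*}

noncomputable def augSpan [Group P] (H : Subgroup P) : Submodule F (MonoidAlgebra F P) :=
  Submodule.span F {x | ∃ h ∈ H, single h 1 - 1 = x}

variable {F}

theorem single_sub_one_mem_augSpan [Group P] {H : Subgroup P} {h : P} (hh : h ∈ H) :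
    single h (1 : F) - 1 ∈ augSpan F H :=
  Submodule.subset_span ⟨h, hh, rfl⟩

theorem sub_lift_one_smul_one_mem_augSpan_top [Group P] (x : MonoidAlgebra F P) :
    x - lift F F P 1 x • 1 ∈ augSpan F ⊤ := by
  induction x using MonoidAlgebra.induction_linear with
  | zero => simp
  | add x y hx hy =>
    rw [map_add, add_smul, add_sub_add_comm]
    exact add_mem hx hy
  | single a r =>
    rw [lift_single, MonoidHom.one_apply, smul_eq_mul, mul_one, ← mul_one r, ← smul_single',
      mul_one, ← smul_sub]
    exact Submodule.smul_mem _ r (single_sub_one_mem_augSpan (Subgroup.mem_top a))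

theorem single_prod_sub_one_sub_sum_mem [CommGroup P] {H : Subgroup P} {ι : Type*}
    (s : Finset ι) {f : ι → P} (hf : ∀ i, f i ∈ H) :
    (single (∏ i ∈ s, f i) (1 : F) - 1) - ∑ i ∈ s, (single (f i) (1 : F) - 1) ∈
      augSpan F H ^ 2 := by
  classical
  induction s using Finset.induction_on with
  | empty => simp [← one_def]
  | insert a s ha ih =>
    rw [Finset.prod_insert ha, Finset.sum_insert ha]
    have key : (single (f a * ∏ i ∈ s, f i) (1 : F) - 1) -
          ((single (f a) 1 - 1) + ∑ i ∈ s, (single (f i) 1 - 1)) =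
        (single (f a) 1 - 1) * (single (∏ i ∈ s, f i) 1 - 1) +
          ((single (∏ i ∈ s, f i) 1 - 1) - ∑ i ∈ s, (single (f i) 1 - 1)) := by
      simp only [← of_apply, map_mul]
      ring
    rw [pow_two] at ih ⊢
    rw [key]
    exact add_mem (Submodule.mul_mem_mul (single_sub_one_mem_augSpan (hf a))
      (single_sub_one_mem_augSpan (Subgroup.prod_mem H fun i _ => hf i))) ih

end AugSpan

section PGroup

variable {F : Type*} [Field F] (p : ℕ) [Fact p.Prime] [CharP F p]

theorem single_sub_one_mem_jacRad {G : Type*} [CommGroup G] {g : G} {k : ℕ}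
    (hg : g ^ p ^ k = 1) : single g (1 : F) - 1 ∈ jacRad F (MonoidAlgebra F G) := by
  have : CharP (MonoidAlgebra F G) p := charP_of_injective_algebraMap' F p
  refine mem_jacRad_of_isNilpotent ⟨p ^ k, ?_⟩
  rw [sub_pow_char_pow, single_pow, one_pow, hg, one_pow, ← one_def, sub_self]

theorem augSpan_pow_LL_eq_bot {P : Type*} [CommGroup P] {H : Subgroup P} [Finite H]
    (hH : IsPGroup p H) : augSpan F H ^ LL F (MonoidAlgebra F H) = ⊥ := by
  let φ := mapDomainAlgHom F F H.subtype
  have hle : augSpan F H ≤ (jacRad F (MonoidAlgebra F H)).map φ.toLinearMap := by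
    refine Submodule.span_le.2 ?_
    rintro _ ⟨h, hh, rfl⟩
    obtain ⟨k, hk⟩ := hH ⟨h, hh⟩
    refine ⟨single ⟨h, hh⟩ 1 - 1, single_sub_one_mem_jacRad p hk, ?_⟩
    simp only [AlgHom.toLinearMap_apply, map_sub, map_one]
    simp [φ]
  rw [← le_bot_iff, ← Submodule.map_bot φ.toLinearMap, ← jacRad_pow_LL_eq_bot,
    Submodule.map_pow]
  exact pow_le_pow_left' hle _

end PGroup

theorem single_mem_fixedPointAlgebra {F P : Type*} [CommSemiring F] [Group P]
    {I : Subgroup (MulAut P)} {c : P} (hc : c ∈ fixedSubgroup I) :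
    single c (1 : F) ∈ fixedPointAlgebra F I := fun γ hγ => by
  rw [domCongr_single]
  exact congrArg (single · 1) (hc γ hγ)

section OrbitTrace

variable (F : Type*) {P : Type*}

section Group

variable [CommRing F] [Group P] (I : Subgroup (MulAut P)) [Fintype I]

noncomputable def orbitTrace : MonoidAlgebra F P →ₗ[F] MonoidAlgebra F P :=
  ∑ γ : I, (domCongr F F (γ : P ≃* P)).toLinearMap

variable {F I}

theorem orbitTrace_apply (x : MonoidAlgebra F P) :
    orbitTrace F I x = ∑ γ : I, domCongr F F (γ : P ≃* P) x := by
  simp [orbitTrace]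

theorem orbitTrace_of_mem {x : MonoidAlgebra F P} (hx : x ∈ fixedPointAlgebra F I) :
    orbitTrace F I x = Fintype.card I • x := by
  rw [orbitTrace_apply, Finset.sum_congr rfl fun γ _ => hx _ γ.2, Finset.sum_const,
    Finset.card_univ]

theorem orbitTrace_mul_of_mem {u : MonoidAlgebra F P} (hu : u ∈ fixedPointAlgebra F I)
    (y : MonoidAlgebra F P) : orbitTrace F I (u * y) = u * orbitTrace F I y := by
  simp only [orbitTrace_apply, map_mul, Finset.mul_sum]
  exact Finset.sum_congr rfl fun γ _ => by rw [hu _ γ.2]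

end Group

section CommGroup

variable {F} [CommRing F] [CommGroup P] {I : Subgroup (MulAut P)} [Fintype I]

theorem orbitTrace_single_sub_one_mem_augSpan_pow_two {q : P} (hq : q ∈ commSubgroup I) :
    orbitTrace F I (single q 1 - 1) ∈ augSpan F (commSubgroup I) ^ 2 := by
  have h := single_prod_sub_one_sub_sum_mem (F := F) Finset.univ
    fun γ : I => map_mem_commSubgroup γ.2 hq
  rw [← autNorm_apply, commSubgroup_le_ker_autNorm I hq, ← one_def, sub_self, zero_sub,
    neg_mem_iff] at h
  convert h using 1
  simp [orbitTrace_apply, domCongr_single]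

theorem orbitTrace_single_sub_one_mem {c q : P} (hc : c ∈ fixedSubgroup I)
    (hq : q ∈ commSubgroup I) :
    orbitTrace F I (single (c * q) 1 - 1) ∈
      augSpan F (fixedSubgroup I) * ⊤ ⊔ augSpan F (commSubgroup I) ^ 2 := by
  have hsplit : single (c * q) (1 : F) - 1 =
      (single c 1 - 1) * single q 1 + (single q 1 - 1) := by
    simp only [← of_apply, map_mul]
    ring
  have hc' : single c (1 : F) - 1 ∈ fixedPointAlgebra F I :=
    sub_mem (single_mem_fixedPointAlgebra hc) (one_mem _)
  rw [hsplit, map_add, orbitTrace_mul_of_mem hc']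
  exact Submodule.add_mem_sup (Submodule.mul_mem_mul (single_sub_one_mem_augSpan hc)
    Submodule.mem_top) (orbitTrace_single_sub_one_mem_augSpan_pow_two hq)

theorem map_orbitTrace_augSpan_top_le (hsup : fixedSubgroup I ⊔ commSubgroup I = ⊤) :
    (augSpan F ⊤).map (orbitTrace F I) ≤
      augSpan F (fixedSubgroup I) * ⊤ ⊔ augSpan F (commSubgroup I) ^ 2 := by
  rw [augSpan, Submodule.map_span_le]
  rintro _ ⟨x, -, rfl⟩
  obtain ⟨c, hc, q, hq, rfl⟩ := Subgroup.mem_sup.1 (hsup ▸ Subgroup.mem_top x)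
  exact orbitTrace_single_sub_one_mem hc hq

end CommGroup

variable {F} [Field F] [CommGroup P] {I : Subgroup (MulAut P)} [Fintype I]

theorem mem_of_mem_fixedPointAlgebra_of_lift_eq_zero
    (hsup : fixedSubgroup I ⊔ commSubgroup I = ⊤) (hcard : (Fintype.card I : F) ≠ 0)
    {x : MonoidAlgebra F P} (hx : x ∈ fixedPointAlgebra F I) (hε : lift F F P 1 x = 0) :
    x ∈ augSpan F (fixedSubgroup I) * ⊤ ⊔ augSpan F (commSubgroup I) ^ 2 := by
  have hx' : x ∈ augSpan F ⊤ := by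
    simpa [hε] using sub_lift_one_smul_one_mem_augSpan_top x
  have h := map_orbitTrace_augSpan_top_le hsup (Submodule.mem_map_of_mem hx')
  rw [orbitTrace_of_mem hx, ← Nat.cast_smul_eq_nsmul F] at h
  simpa [hcard] using Submodule.smul_mem _ (Fintype.card I : F)⁻¹ h

theorem map_jacRad_fixedPointAlgebra_le (hsup : fixedSubgroup I ⊔ commSubgroup I = ⊤)
    (hcard : (Fintype.card I : F) ≠ 0) :
    (jacRad F (fixedPointAlgebra F I)).map (fixedPointAlgebra F I).val.toLinearMap ≤
      augSpan F (fixedSubgroup I) * ⊤ ⊔ augSpan F (commSubgroup I) ^ 2 := by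
  rintro _ ⟨x, hx, rfl⟩
  exact mem_of_mem_fixedPointAlgebra_of_lift_eq_zero hsup hcard x.2
    (apply_eq_zero_of_mem_jacRad ((lift F F P 1).comp (fixedPointAlgebra F I).val) hx)

end OrbitTrace

theorem loewyLength_fixedPointAlgebra_le_general (F : Type*) [Field F]
    (p : ℕ) [Fact p.Prime] [CharP F p]
    (P : Type*) [CommGroup P] [Fintype P] (hP : IsPGroup p P)
    (I : Subgroup (MulAut P)) (hI : Nat.Coprime (Nat.card I) p) :
    LL F (fixedPointAlgebra F I) ≤
      LL F (MonoidAlgebra F (fixedSubgroup I)) +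
        (LL F (MonoidAlgebra F (commSubgroup I)) - 1) / 2 := by
  let _ : Fintype I := Fintype.ofFinite I
  have hsup : fixedSubgroup I ⊔ commSubgroup I = ⊤ := by
    obtain ⟨k, hk⟩ := IsPGroup.iff_card.1 hP
    exact fixedSubgroup_sup_commSubgroup_eq_top I (hk ▸ (hI.symm.pow_left k))
  have hcard : (Fintype.card I : F) ≠ 0 := by
    rw [← Nat.card_eq_fintype_card, Ne, CharP.cast_eq_zero_iff F p]
    exact (Nat.Prime.coprime_iff_not_dvd Fact.out).1 hI.symm
  set lC := LL F (MonoidAlgebra F (fixedSubgroup I))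
  set lQ := LL F (MonoidAlgebra F (commSubgroup I))
  have hC : (augSpan F (fixedSubgroup I) * ⊤) ^ lC = 0 := by
    rw [mul_pow, augSpan_pow_LL_eq_bot p (hP.to_subgroup _), Submodule.zero_eq_bot,
      Submodule.bot_mul]
  have hQ : (augSpan F (commSubgroup I) ^ 2) ^ ((lQ + 1) / 2) = 0 := by
    rw [← pow_mul]
    exact pow_eq_zero_of_le (by omega) (augSpan_pow_LL_eq_bot p (hP.to_subgroup _))
  have : 0 < lC := LL_pos
  have : 0 < lQ := LL_pos
  refine LL_le_of_jacRad_pow_eq_bot (by omega) <| Submodule.pow_eq_bot_of_map_le _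
    Subtype.val_injective (map_jacRad_fixedPointAlgebra_le hsup hcard) ?_
  exact (Commute.all _ _).add_pow_eq_zero_of_add_le_succ_of_pow_eq_zero hC hQ (by omega)

/-- Let `F` be algebraically closed of characteristic `p > 0`, `P` a finite abelian `p`-group and
`I` a `p'`-subgroup of `Aut P`. Then
`LL((FP)^I) ≤ LL(F C_P(I)) + (LL(F[P,I]) - 1)/2`. -/
theorem loewyLength_fixedPointAlgebra_le (F : Type*) [Field F] [IsAlgClosed F]
    (p : ℕ) [Fact p.Prime] [CharP F p]
    (P : Type*) [CommGroup P] [Fintype P] (hP : IsPGroup p P)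
    (I : Subgroup (MulAut P)) (hI : Nat.Coprime (Nat.card I) p) :
    LL F (fixedPointAlgebra F I) ≤
      LL F (MonoidAlgebra F (fixedSubgroup I)) +
        (LL F (MonoidAlgebra F (commSubgroup I)) - 1) / 2 :=
  loewyLength_fixedPointAlgebra_le_general F p P hP I hI
end
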